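/- Let L be a finite-dimensional Lie algebra over any field F. Then N*(L) ⊆ Ñ(L). -/

import Mathlib

namespace Paper

open LieAlgebra

section AlgDefs

variable (F : Type*) [Field F] (L : Type*) [LieRing L] [LieAlgebra F L]

/-- The nilradical of a Lie algebra: the largest nilpotent ideal (the sup of nilpotent ideals). -/
noncomputable def nilrad : LieIdeal F L :=
  sSup {I : LieIdeal F L | LieRing.IsNilpotent I}

/-- The nilpotency class of a Lie algebra. -/
noncomputable def nilClass (F : Type*) [Field F] (L : Type*) [LieRing L] [LieAlgebra F L] : ℕ :=
  LieModule.nilpotencyLength L L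

/-- A Lie algebra is nilregular if the field has characteristic zero, or characteristic `p > 0`
and its nilradical has nilpotency class less than `p - 1`. -/
noncomputable def Nilregular : Prop :=
  ringChar F = 0 ∨ nilClass F (nilrad F L) < ringChar F - 1

/-- A Lie algebra is solregular if the field has characteristic zero, or characteristic `p > 0`
and its radical has derived length less than `log₂ p`. -/
noncomputable def Solregular : Prop :=
  ringChar F = 0 ∨ 2 ^ LieAlgebra.derivedLength F (LieAlgebra.radical F L) < ringChar F

/-- Regular means nilregular or solregular. -/
noncomputable def Regular : Prop := Nilregular F L ∨ Solregular F L

end AlgDefs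

section IdealDefs

variable {F : Type*} [Field F] {L : Type*} [LieRing L] [LieAlgebra F L]

/-- The centraliser `C_L(I)` of an ideal `I`, as an ideal of `L`. -/
def centralizer (I : LieIdeal F L) : LieIdeal F L where
  carrier := {x : L | ∀ y ∈ I, ⁅x, y⁆ = 0}
  zero_mem' := by intro y hy; simp
  add_mem' := by intro a b ha hb y hy; rw [add_lie, ha y hy, hb y hy, add_zero]
  smul_mem' := by intro c x hx y hy; rw [smul_lie, hx y hy, smul_zero]
  lie_mem := by
    intro x m hm y hy
    have h1 : ⁅x, ⁅m, y⁆⁆ = (0 : L) := by rw [hm y hy, lie_zero]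
    have h2 : ⁅m, ⁅x, y⁆⁆ = (0 : L) := hm _ (I.lie_mem hy)
    show ⁅⁅x, m⁆, y⁆ = (0 : L)
    rw [lie_lie, h1, h2, sub_zero]

/-- The centre `Z(I)` of an ideal `I`, as an ideal of `L`. -/
def idealCenter (I : LieIdeal F L) : LieIdeal F L where
  carrier := {x : L | x ∈ I ∧ ∀ y ∈ I, ⁅x, y⁆ = 0}
  zero_mem' := ⟨I.zero_mem, by intro y hy; simp⟩
  add_mem' := by
    intro a b ha hb
    exact ⟨I.add_mem ha.1 hb.1, fun y hy => by rw [add_lie, ha.2 y hy, hb.2 y hy, add_zero]⟩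
  smul_mem' := by
    intro c x hx
    exact ⟨I.smul_mem c hx.1, fun y hy => by rw [smul_lie, hx.2 y hy, smul_zero]⟩
  lie_mem := by
    intro x m hm
    refine ⟨I.lie_mem hm.1, fun y hy => ?_⟩
    have h1 : ⁅x, ⁅m, y⁆⁆ = (0 : L) := by rw [hm.2 y hy, lie_zero]
    have h2 : ⁅m, ⁅x, y⁆⁆ = (0 : L) := hm.2 _ (I.lie_mem hy)
    show ⁅⁅x, m⁆, y⁆ = (0 : L)
    rw [lie_lie, h1, h2, sub_zero]

/-- The centraliser `C_L(A/B)` of a chief factor, as an ideal of `L`. -/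
def chiefCentralizer (A B : LieIdeal F L) : LieIdeal F L where
  carrier := {x : L | ∀ a ∈ A, ⁅x, a⁆ ∈ B}
  zero_mem' := by intro a ha; simp [B.zero_mem]
  add_mem' := by intro x y hx hy a ha; rw [add_lie]; exact B.add_mem (hx a ha) (hy a ha)
  smul_mem' := by intro c x hx a ha; rw [smul_lie]; exact B.smul_mem c (hx a ha)
  lie_mem := by
    intro x m hm a ha
    show ⁅⁅x, m⁆, a⁆ ∈ B
    rw [lie_lie]
    exact B.sub_mem (B.lie_mem (hm a ha)) (hm _ (A.lie_mem ha))

/-- `A/Z` is a minimal ideal of `L/Z` (via the ideal correspondence). -/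
def IsMinModIdeal (Z A : LieIdeal F L) : Prop :=
  Z < A ∧ ∀ B : LieIdeal F L, Z ≤ B → B ≤ A → B = Z ∨ B = A

/-- `A` is a minimal ideal of `L`. -/
def IsMinimalIdeal (A : LieIdeal F L) : Prop := IsMinModIdeal ⊥ A

/-- An ideal `A` of `L` is quasi-minimal if `A² = A` and `A/Z(A)` is a minimal ideal
of `L/Z(A)`. -/
def IsQuasiMinimal (A : LieIdeal F L) : Prop :=
  ⁅A, A⁆ = A ∧ IsMinModIdeal (idealCenter A) A

end IdealDefs

section MoreDefs

variable (F : Type*) [Field F] (L : Type*) [LieRing L] [LieAlgebra F L]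

/-- `E†(L)`: the subalgebra generated by the quasi-minimal components of `L`. -/
noncomputable def Edagger : LieSubalgebra F L :=
  LieSubalgebra.lieSpan F L (⋃ A ∈ {A : LieIdeal F L | IsQuasiMinimal A}, (A : Set L))

/-- `N†(L) = N(L) + E†(L)`: the quasi-minimal radical of `L`. -/
noncomputable def Ndagger : LieSubalgebra F L :=
  LieIdeal.toLieSubalgebra F L (nilrad F L) ⊔ Edagger F L

/-- The generalised nilradical `N*(L)`: the ideal containing `N = N(L)` with
`N*(L)/N` the sum of all minimal ideals of `L/N` contained in `(N + C_L(N))/N`. -/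
noncomputable def Nstar : LieIdeal F L :=
  nilrad F L ⊔ sSup {A : LieIdeal F L | IsMinModIdeal (nilrad F L) A ∧
    A ≤ nilrad F L ⊔ centralizer (nilrad F L)}

/-- The Frattini ideal: the largest ideal contained in every maximal subalgebra. -/
def frattini : LieIdeal F L :=
  sSup {I : LieIdeal F L | ∀ M : LieSubalgebra F L, IsCoatom M → (I : Set L) ⊆ M}

/-- `Ñ(L)`: the ideal with `Ñ(L)/φ(L) = Soc (L/φ(L))`. -/
noncomputable def Ntilde : LieIdeal F L :=
  frattini F L ⊔ sSup {A : LieIdeal F L | IsMinModIdeal (frattini F L) A}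

/-- A characteristic ideal: one invariant under all derivations. -/
def IsCharIdeal (J : LieIdeal F L) : Prop :=
  ∀ D : LieDerivation F L L, ∀ x ∈ J, D x ∈ J

/-- The characteristic radical `R_c(L)`: the sum of all solvable characteristic ideals. -/
noncomputable def charRadical : LieIdeal F L :=
  sSup {J : LieIdeal F L | LieAlgebra.IsSolvable J ∧ IsCharIdeal F L J}

/-- A subideal: a subalgebra joined to `L` by a chain of successive ideals. -/
def IsSubideal (S : LieSubalgebra F L) : Prop :=
  ∃ n : ℕ, ∃ c : Fin (n + 1) → LieSubalgebra F L,
    c 0 = S ∧ c (Fin.last n) = ⊤ ∧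
    ∀ i : Fin n, c i.castSucc ≤ c i.succ ∧
      ∀ x ∈ c i.succ, ∀ y ∈ c i.castSucc, ⁅x, y⁆ ∈ c i.castSucc

end MoreDefs

/-!
Everything rests on one property of the Frattini ideal `φ`: an ideal `D ⊄ φ` misses some
maximal subalgebra `M`, and then `L = D + M`. Hence an ideal `K` that is nilpotent modulo `φ`
has `K² ⊆ φ` (from `L = K² + M` one gets `K = Kʲ + (K ∩ M)` for every `j`, so `K ⊆ M`); by
Fitting's bound this gives `N² ⊆ φ`. An ideal `K ⊇ φ` with `K² ⊆ φ` lies in `Ñ`: split off a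
minimal ideal `A/φ ⊆ K/φ` and a maximal subalgebra `M ⊉ A`; then `K = A + K ∩ M`, and we induct
on the smaller ideal `K ∩ M`.

Now let `A/N` be a minimal ideal of `L/N` inside `(N + C_L(N))/N`, so `[A, N] ⊆ φ`. If `A² ⊆ N`
then `A` is nilpotent modulo `φ`. Otherwise `A = T + N` with `T = A²`, which is perfect modulo
`φ`; `T ∩ (N + φ)` is central in `T` modulo `φ`, hence lies in `φ`, and then minimality of
`A/N` forces `(T + φ)/φ` to be zero or a minimal ideal of `L/φ`.
-/

section Brackets

variable {F : Type*} [Field F] {L : Type*} [LieRing L] [LieAlgebra F L]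

open LieSubmodule

lemma lie_le_iff_le_chiefCentralizer {I J B : LieIdeal F L} :
    ⁅J, I⁆ ≤ B ↔ J ≤ chiefCentralizer I B :=
  lie_le_iff _ _ _

lemma sSup_lie_sSup_le {S : Set (LieIdeal F L)} {B : LieIdeal F L}
    (h : ∀ I ∈ S, ∀ J ∈ S, ⁅I, J⁆ ≤ B) : ⁅sSup S, sSup S⁆ ≤ B := by
  rw [lie_le_iff_le_chiefCentralizer]
  refine sSup_le fun J hJ => ?_
  rw [← lie_le_iff_le_chiefCentralizer, lie_comm, lie_le_iff_le_chiefCentralizer]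
  exact sSup_le fun I hI => lie_le_iff_le_chiefCentralizer.mp (h I hI J hJ)

lemma centralizer_lie_eq_bot (I : LieIdeal F L) : ⁅centralizer I, I⁆ = ⊥ :=
  (lie_eq_bot_iff _ _).mpr fun _ hx _ hy => hx _ hy

end Brackets

section Frattini

variable {F : Type*} [Field F] {L : Type*} [LieRing L] [LieAlgebra F L]

open LieSubmodule

lemma mem_of_mem_frattini {M : LieSubalgebra F L} (hM : IsCoatom M) {x : L}
    (hx : x ∈ frattini F L) : x ∈ M := by
  have h : (frattini F L).toSubmodule ≤ M.toSubmodule := by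
    rw [frattini, sSup_toSubmodule]
    exact sSup_le fun _ ⟨I, hI, hIp⟩ => hIp ▸ hI M hM
  exact h hx

def idealSupSubalgebra (D : LieIdeal F L) (M : LieSubalgebra F L) : LieSubalgebra F L where
  toSubmodule := D.toSubmodule ⊔ M.toSubmodule
  lie_mem' {x y} hx hy := by
    obtain ⟨d, hd, m, hm, rfl⟩ := Submodule.mem_sup.mp hx
    obtain ⟨d', hd', m', hm', rfl⟩ := Submodule.mem_sup.mp hy
    rw [add_lie, lie_add m, ← add_assoc]
    exact add_mem (Submodule.mem_sup_left (add_mem (lie_mem_left F L D _ _ hd) (D.lie_mem hd')))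
      (Submodule.mem_sup_right (M.lie_mem hm hm'))

lemma sup_eq_top_of_isCoatom {D : LieIdeal F L} {M : LieSubalgebra F L} (hM : IsCoatom M)
    (hDM : ¬ D.toSubmodule ≤ M.toSubmodule) : D.toSubmodule ⊔ M.toSubmodule = ⊤ := by
  have h : idealSupSubalgebra D M = ⊤ :=
    hM.2 _ (lt_of_le_of_ne (fun _ hm => Submodule.mem_sup_right hm) fun he =>
      hDM (le_sup_left.trans (le_of_eq (congrArg LieSubalgebra.toSubmodule he.symm))))
  exact congrArg LieSubalgebra.toSubmodule h

lemma le_frattini_of_forall_isCoatom {D : LieIdeal F L}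
    (h : ∀ M : LieSubalgebra F L, IsCoatom M → D.toSubmodule ⊔ M.toSubmodule = ⊤ →
      D.toSubmodule ≤ M.toSubmodule) :
    D ≤ frattini F L :=
  le_sSup fun M hM => by_contra fun hDM => hDM (h M hM (sup_eq_top_of_isCoatom hM hDM))

lemma exists_isCoatom_of_not_le_frattini {D : LieIdeal F L} (hD : ¬ D ≤ frattini F L) :
    ∃ M : LieSubalgebra F L, IsCoatom M ∧ D.toSubmodule ⊔ M.toSubmodule = ⊤ ∧
      ¬ D.toSubmodule ≤ M.toSubmodule := by
  contrapose! hD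
  exact le_frattini_of_forall_isCoatom hD

end Frattini

section LowerCentralSeries

variable {R : Type*} [CommRing R] {L : Type*} [LieRing L] [LieAlgebra R L]

open LieSubmodule

lemma lcs_succ_le_map_lowerCentralSeries (I : LieIdeal R L) (k : ℕ) :
    (I.lcs L (k + 1)).toSubmodule ≤
      (LieModule.lowerCentralSeries R I I k).toSubmodule.map I.toSubmodule.subtype := by
  induction k with
  | zero =>
    intro x hx
    exact ⟨⟨x, lie_le_left I ⊤ hx⟩, mem_top _, rfl⟩
  | succ k ih =>
    rw [LieIdeal.lcs_succ, lieIdeal_oper_eq_linear_span', Submodule.span_le]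
    rintro _ ⟨x, hx, y, hy, rfl⟩
    obtain ⟨y', hy', rfl⟩ := ih hy
    refine ⟨⁅(⟨x, hx⟩ : I), y'⁆, ?_, rfl⟩
    rw [SetLike.mem_coe, mem_toSubmodule, LieModule.lowerCentralSeries_succ]
    exact lie_mem_lie (mem_top _) hy'

lemma exists_lcs_eq_bot_of_isNilpotent {I : LieIdeal R L} (hI : LieRing.IsNilpotent I) :
    ∃ k, I.lcs L k = ⊥ := by
  obtain ⟨k, hk⟩ := (LieModule.isNilpotent_iff R I I).mp hI
  refine ⟨k + 1, (toSubmodule_eq_bot _).mp (eq_bot_iff.mpr ?_)⟩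
  simpa [hk] using lcs_succ_le_map_lowerCentralSeries I k

lemma lcs_sup_le (I J : LieIdeal R L) (p q : ℕ) :
    (I ⊔ J).lcs L (p + q) ≤ I.lcs L p ⊔ J.lcs L q := by
  induction h : p + q generalizing p q with
  | zero =>
    obtain ⟨rfl, rfl⟩ : p = 0 ∧ q = 0 := by omega
    simp
  | succ n ih =>
    rw [LieIdeal.lcs_succ, sup_lie]
    refine sup_le ?_ ?_
    · rcases p with _ | p
      · simp
      calc ⁅I, (I ⊔ J).lcs L n⁆ ≤ ⁅I, I.lcs L p ⊔ J.lcs L q⁆ :=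
            mono_lie_right I (ih p q (by omega))
        _ ≤ I.lcs L (p + 1) ⊔ J.lcs L q := by
            rw [lie_sup, LieIdeal.lcs_succ]
            exact sup_le_sup_left (lie_le_right _ _) _
    · rcases q with _ | q
      · simp
      calc ⁅J, (I ⊔ J).lcs L n⁆ ≤ ⁅J, I.lcs L p ⊔ J.lcs L q⁆ :=
            mono_lie_right J (ih p q (by omega))
        _ ≤ I.lcs L p ⊔ J.lcs L (q + 1) := by
            rw [lie_sup, LieIdeal.lcs_succ]
            exact sup_le_sup_right (lie_le_right _ _) _

end LowerCentralSeries

section FrattiniNilpotent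

variable {F : Type*} [Field F] {L : Type*} [LieRing L] [LieAlgebra F L]

open LieSubmodule

lemma lie_self_le_frattini_of_lcs_le {K : LieIdeal F L} {n : ℕ}
    (h : K.lcs L n ≤ frattini F L) : ⁅K, K⁆ ≤ frattini F L := by
  refine le_frattini_of_forall_isCoatom fun M hM hKKM => ?_
  set U := M.toSubmodule ⊓ K.toSubmodule
  have hK : K.toSubmodule = ⁅K, K⁆.toSubmodule ⊔ U := by
    rw [← sup_inf_assoc_of_le _ ((toSubmodule_le_toSubmodule _ _).mpr
      (lie_le_left K K)), hKKM, top_inf_eq]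
  have hdecomp : ∀ j, K.toSubmodule ≤ (K.lcs L (j + 1)).toSubmodule ⊔ U := by
    intro j
    induction j with
    | zero =>
      rw [hK, zero_add, LieIdeal.lcs_succ, LieIdeal.lcs_zero]
      exact sup_le_sup_right ((toSubmodule_le_toSubmodule _ _).mpr
        (mono_lie_right K le_top)) U
    | succ j ih =>
      have hKK : ⁅K, K⁆.toSubmodule ≤ (K.lcs L (j + 2)).toSubmodule ⊔ U := by
        rw [lieIdeal_oper_eq_linear_span', Submodule.span_le]
        rintro _ ⟨x, hx, y, hy, rfl⟩
        obtain ⟨a, ha, u, hu, rfl⟩ := Submodule.mem_sup.mp (ih hx)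
        obtain ⟨a', ha', u', hu', rfl⟩ := Submodule.mem_sup.mp (ih hy)
        have hay : ⁅a, a' + u'⁆ ∈ K.lcs L (j + 2) := by
          rw [← lie_skew, LieIdeal.lcs_succ]
          exact neg_mem (lie_mem_lie hy ha)
        have hua' : ⁅u, a'⁆ ∈ K.lcs L (j + 2) := by
          rw [LieIdeal.lcs_succ]
          exact lie_mem_lie hu.2 ha'
        have huu' : ⁅u, u'⁆ ∈ U := ⟨M.lie_mem hu.1 hu'.1, K.lie_mem hu'.2⟩
        rw [add_lie, lie_add u, ← add_assoc]
        exact Submodule.add_mem _ (Submodule.mem_sup_left (add_mem hay hua'))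
          (Submodule.mem_sup_right huu')
      calc K.toSubmodule = ⁅K, K⁆.toSubmodule ⊔ U := hK
        _ ≤ ((K.lcs L (j + 2)).toSubmodule ⊔ U) ⊔ U := sup_le_sup_right hKK U
        _ = (K.lcs L (j + 2)).toSubmodule ⊔ U := by rw [sup_assoc, sup_idem]
  have hlcs : K.lcs L (n + 1) ≤ frattini F L :=
    (LieIdeal.lcs_succ K L n ▸ lie_le_right _ _).trans h
  have hKM : K.toSubmodule ≤ M.toSubmodule :=
    (hdecomp n).trans (sup_le (fun _ hx => mem_of_mem_frattini hM (hlcs hx)) inf_le_left)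
  exact ((toSubmodule_le_toSubmodule _ _).mpr (lie_le_left K K)).trans hKM

lemma lie_le_frattini_of_isNilpotent {I J : LieIdeal F L} (hI : LieRing.IsNilpotent I)
    (hJ : LieRing.IsNilpotent J) : ⁅I, J⁆ ≤ frattini F L := by
  obtain ⟨p, hp⟩ := exists_lcs_eq_bot_of_isNilpotent hI
  obtain ⟨q, hq⟩ := exists_lcs_eq_bot_of_isNilpotent hJ
  have h : (I ⊔ J).lcs L (p + q) = ⊥ := by
    simpa [hp, hq] using lcs_sup_le I J p q
  exact (mono_lie le_sup_left le_sup_right).trans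
    (lie_self_le_frattini_of_lcs_le (h.trans_le bot_le))

lemma nilrad_lie_nilrad_le_frattini : ⁅nilrad F L, nilrad F L⁆ ≤ frattini F L :=
  sSup_lie_sSup_le fun _ hI _ hJ => lie_le_frattini_of_isNilpotent hI hJ

end FrattiniNilpotent

section Socle

variable {F : Type*} [Field F] {L : Type*} [LieRing L] [LieAlgebra F L]

open LieSubmodule

lemma exists_isMinModIdeal_le [IsArtinian F L] {Z X : LieIdeal F L} (h : Z < X) :
    ∃ A ≤ X, IsMinModIdeal Z A := by
  obtain ⟨A, ⟨hZA, hAX⟩, hmin⟩ := (wellFoundedLT_of_isArtinian F L L).wf.has_min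
    {B | Z < B ∧ B ≤ X} ⟨X, h, le_rfl⟩
  refine ⟨A, hAX, hZA, fun B hZB hBA => ?_⟩
  rcases hZB.eq_or_lt with hZB | hZB
  · exact Or.inl hZB.symm
  · exact Or.inr (eq_of_le_of_not_lt hBA (hmin B ⟨hZB, hBA.trans hAX⟩))

lemma le_Ntilde_of_forall_eq_or_eq {X : LieIdeal F L} (hX : frattini F L ≤ X)
    (hmin : ∀ B : LieIdeal F L, frattini F L ≤ B → B ≤ X → B = frattini F L ∨ B = X) :
    X ≤ Ntilde F L := by
  rcases hX.eq_or_lt with hX | hX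
  · exact hX ▸ le_sup_left
  · exact (le_sSup (s := {A | IsMinModIdeal (frattini F L) A}) ⟨hX, hmin⟩).trans le_sup_right

lemma exists_lieIdeal_toSubmodule_eq_inf {A K : LieIdeal F L} {M : LieSubalgebra F L}
    (hAM : A.toSubmodule ⊔ M.toSubmodule = ⊤) (hAK : ⁅A, K⁆.toSubmodule ≤ M.toSubmodule) :
    ∃ K' : LieIdeal F L, K'.toSubmodule = M.toSubmodule ⊓ K.toSubmodule := by
  refine ⟨{ toSubmodule := M.toSubmodule ⊓ K.toSubmodule,
             lie_mem := fun {z k} hk => ?_ }, rfl⟩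
  obtain ⟨a, ha, m, hm, rfl⟩ :=
    Submodule.mem_sup.mp (hAM.symm ▸ Submodule.mem_top : z ∈ A.toSubmodule ⊔ M.toSubmodule)
  rw [add_lie]
  exact add_mem (Submodule.mem_inf.mpr ⟨hAK (lie_mem_lie ha hk.2), K.lie_mem hk.2⟩)
    (Submodule.mem_inf.mpr ⟨M.lie_mem hm hk.1, K.lie_mem hk.2⟩)

lemma le_Ntilde_of_frattini_le [IsArtinian F L] {K : LieIdeal F L} (hφK : frattini F L ≤ K)
    (hKK : ⁅K, K⁆ ≤ frattini F L) : K ≤ Ntilde F L := by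
  have := wellFoundedLT_of_isArtinian F L L
  induction K using WellFoundedLT.induction with
  | _ K ih =>
  by_cases hKφ : K ≤ frattini F L
  · exact hKφ.trans le_sup_left
  obtain ⟨A, hAK, hA⟩ := exists_isMinModIdeal_le (lt_of_le_not_ge hφK hKφ)
  obtain ⟨M, hM, hAM, hAnM⟩ := exists_isCoatom_of_not_le_frattini hA.1.not_ge
  have hφM : (frattini F L).toSubmodule ≤ M.toSubmodule := fun _ => mem_of_mem_frattini hM
  have hAK' : A.toSubmodule ≤ K.toSubmodule := (toSubmodule_le_toSubmodule _ _).mpr hAK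
  obtain ⟨K', hK'⟩ := exists_lieIdeal_toSubmodule_eq_inf hAM
    (((toSubmodule_le_toSubmodule _ _).mpr ((mono_lie hAK le_rfl).trans hKK)).trans hφM)
  have hKAK' : K.toSubmodule = A.toSubmodule ⊔ K'.toSubmodule := by
    rw [hK', ← sup_inf_assoc_of_le _ hAK', hAM, top_inf_eq]
  have hK'K : K' < K := by
    refine lt_of_le_of_ne ((toSubmodule_le_toSubmodule _ _).mp (hK' ▸ inf_le_right))
      fun he => hAnM ?_
    exact (he ▸ hAK').trans (hK'.le.trans inf_le_left)
  have hφK' : frattini F L ≤ K' := (toSubmodule_le_toSubmodule _ _).mp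
    (hK' ▸ le_inf hφM ((toSubmodule_le_toSubmodule _ _).mpr hφK))
  have hK'Nt : K' ≤ Ntilde F L := ih K' hK'K hφK' ((mono_lie hK'K.le hK'K.le).trans hKK)
  exact ((toSubmodule_le_toSubmodule _ _).mp hKAK'.le).trans
    (sup_le (le_Ntilde_of_forall_eq_or_eq hA.1.le hA.2) hK'Nt)

lemma le_Ntilde_of_lie_self_le_frattini [IsArtinian F L] {K : LieIdeal F L}
    (hK : ⁅K, K⁆ ≤ frattini F L) : K ≤ Ntilde F L := by
  refine le_sup_left.trans (le_Ntilde_of_frattini_le le_sup_right ?_)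
  rw [sup_lie, lie_sup, lie_sup]
  exact sup_le (sup_le hK (lie_le_right _ _)) (sup_le (lie_le_left _ _) (lie_le_left _ _))

end Socle

section ChiefFactor

variable {F : Type*} [Field F] {L : Type*} [LieRing L] [LieAlgebra F L]

open LieSubmodule

lemma le_frattini_of_lie_le_frattini {T W : LieIdeal F L} (hT : T ≤ ⁅T, T⁆ ⊔ frattini F L)
    (hWT : W ≤ T) (hTW : ⁅T, W⁆ ≤ frattini F L) : W ≤ frattini F L := by
  refine le_frattini_of_forall_isCoatom fun M hM hWM => ?_
  have hφM : (frattini F L).toSubmodule ≤ M.toSubmodule := fun _ => mem_of_mem_frattini hM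
  have hWT' : W.toSubmodule ≤ T.toSubmodule := (toSubmodule_le_toSubmodule _ _).mpr hWT
  have hTWM : T.toSubmodule = W.toSubmodule ⊔ M.toSubmodule ⊓ T.toSubmodule := by
    rw [← sup_inf_assoc_of_le _ hWT', hWM, top_inf_eq]
  have hTT : ⁅T, T⁆.toSubmodule ≤ M.toSubmodule := by
    rw [lieIdeal_oper_eq_linear_span', Submodule.span_le]
    rintro _ ⟨x, hx, y, hy, rfl⟩
    obtain ⟨w, hw, m, hm, rfl⟩ := Submodule.mem_sup.mp (hTWM.le hx)
    obtain ⟨w', hw', m', hm', rfl⟩ := Submodule.mem_sup.mp (hTWM.le hy)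
    have hwy : ⁅w, w' + m'⁆ ∈ M := by
      rw [← lie_skew]
      exact neg_mem (hφM (hTW (lie_mem_lie hy hw)))
    rw [add_lie, lie_add m, ← add_assoc]
    exact add_mem (add_mem hwy (hφM (hTW (lie_mem_lie hm.2 hw')))) (M.lie_mem hm.1 hm'.1)
  have hTM : T.toSubmodule ≤ M.toSubmodule :=
    ((toSubmodule_le_toSubmodule _ _).mpr hT).trans (sup_le hTT hφM)
  exact hWT'.trans hTM

lemma lie_self_le_Ntilde [IsArtinian F L] {N A : LieIdeal F L} (hA : IsMinModIdeal N A)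
    (hAN : ⁅A, N⁆ ≤ frattini F L) (hAAN : ⁅A, A⁆ ⊔ N = A) : ⁅A, A⁆ ≤ Ntilde F L := by
  set φ := frattini F L
  set T := ⁅A, A⁆
  have hNA : N ≤ A := hA.1.le
  have hTA : T ≤ A := lie_le_left A A
  have hNN : ⁅N, N⁆ ≤ φ := (mono_lie hNA le_rfl).trans hAN
  have hTN : ⁅T, N⁆ ≤ φ := (mono_lie hTA le_rfl).trans hAN
  have hT : T ≤ ⁅T, T⁆ ⊔ φ :=
    calc T = ⁅T ⊔ N, T ⊔ N⁆ := by rw [hAAN]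
      _ ≤ ⁅T, T⁆ ⊔ φ := by
        rw [sup_lie, lie_sup, lie_sup, lie_comm N T]
        exact sup_le (sup_le le_sup_left (hTN.trans le_sup_right))
          (sup_le (hTN.trans le_sup_right) (hNN.trans le_sup_right))
  have hW : T ⊓ (N ⊔ φ) ≤ φ := by
    refine le_frattini_of_lie_le_frattini hT inf_le_left ?_
    calc ⁅T, T ⊓ (N ⊔ φ)⁆ ≤ ⁅T, N ⊔ φ⁆ := mono_lie_right T inf_le_right
      _ ≤ φ := by
        rw [lie_sup]
        exact sup_le hTN (lie_le_right φ T)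
  refine le_sup_left.trans (le_Ntilde_of_forall_eq_or_eq le_sup_right fun B hφB hBT => ?_)
  rcases hA.2 ((B ⊔ N) ⊓ A) (le_inf le_sup_right hNA) inf_le_right with hBNA | hBNA
  · left
    have hBTφ : B ⊓ T ≤ φ := by
      refine le_trans (le_inf inf_le_right ?_) hW
      exact (le_inf (inf_le_left.trans le_sup_left) (inf_le_right.trans hTA)).trans
        (hBNA.le.trans le_sup_left)
    refine le_antisymm ?_ hφB
    calc B = (φ ⊔ T) ⊓ B := (inf_eq_right.mpr (sup_comm T φ ▸ hBT)).symm
      _ = φ ⊔ B ⊓ T := by rw [sup_inf_assoc_of_le T hφB, inf_comm]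
      _ ≤ φ := sup_le le_rfl hBTφ
  · right
    have hABN : A ≤ B ⊔ N := hBNA ▸ inf_le_left
    have hBN : ⁅B, N⁆ ≤ B := by
      refine (mono_lie hBT le_rfl).trans ?_
      rw [sup_lie]
      exact sup_le (hTN.trans hφB) ((lie_le_left φ N).trans hφB)
    have hTB : T ≤ B :=
      calc T ≤ ⁅B ⊔ N, B ⊔ N⁆ := mono_lie hABN hABN
        _ ≤ B := by
          rw [sup_lie, lie_sup, lie_sup, lie_comm N B]
          exact sup_le (sup_le (lie_le_right B B) hBN) (sup_le hBN (hNN.trans hφB))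
    exact le_antisymm hBT (sup_le hTB hφB)

lemma le_Ntilde_of_isMinModIdeal [IsArtinian F L] {N A : LieIdeal F L}
    (hA : IsMinModIdeal N A) (hAN : ⁅A, N⁆ ≤ frattini F L) : A ≤ Ntilde F L := by
  have hNA : N ≤ A := hA.1.le
  rcases hA.2 (⁅A, A⁆ ⊔ N) le_sup_right (sup_le (lie_le_left A A) hNA) with hAAN | hAAN
  · refine le_Ntilde_of_lie_self_le_frattini (lie_self_le_frattini_of_lcs_le (n := 3) ?_)
    calc A.lcs L 3 ≤ ⁅A, ⁅A, A⁆⁆ := by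
          simp only [LieIdeal.lcs_succ, LieIdeal.lcs_zero]
          exact mono_lie_right A (mono_lie_right A (lie_le_left A ⊤))
      _ ≤ ⁅A, N⁆ := mono_lie_right A (le_sup_left.trans hAAN.le)
      _ ≤ frattini F L := hAN
  · calc A = ⁅A, A⁆ ⊔ N := hAAN.symm
      _ ≤ Ntilde F L := sup_le (lie_self_le_Ntilde hA hAN hAAN)
          (le_Ntilde_of_lie_self_le_frattini ((mono_lie hNA le_rfl).trans hAN))

end ChiefFactor

/-- `N*(L) ⊆ Ñ(L)`. -/
theorem stmt_18 (F : Type*) [Field F] (L : Type*) [LieRing L] [LieAlgebra F L]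
    [FiniteDimensional F L] :
    Nstar F L ≤ Ntilde F L := by
  have hNN := nilrad_lie_nilrad_le_frattini (F := F) (L := L)
  refine sup_le (le_Ntilde_of_lie_self_le_frattini hNN) (sSup_le ?_)
  rintro A ⟨hA, hAC⟩
  refine le_Ntilde_of_isMinModIdeal hA ?_
  calc ⁅A, nilrad F L⁆ ≤ ⁅nilrad F L ⊔ centralizer (nilrad F L), nilrad F L⁆ :=
        LieSubmodule.mono_lie hAC le_rfl
    _ = ⁅nilrad F L, nilrad F L⁆ := by
        rw [LieSubmodule.sup_lie, centralizer_lie_eq_bot, sup_bot_eq]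
    _ ≤ frattini F L := hNN

end Paper
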